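/- Let A be a bounded linear operator on H. Then for every real number r ≥ 1 and every α ∈ [0,1], ber(A)^{2r} ≤ ber(α·((|A| + |A*|)/2)^{2r} + (1−α)·|A|^{2r}). -/

import Mathlib

set_option synthInstance.maxHeartbeats 1000000
set_option maxHeartbeats 1000000

open scoped NNReal
open ContinuousLinearMap

/-- The Berezin number of an operator `T`, relative to the family `k` of
(normalized reproducing kernel) vectors indexed by `Ω`. -/
noncomputable def ber {H : Type*} [NormedAddCommGroup H] [InnerProductSpace ℂ H]
    {Ω : Type*} (k : Ω → H) (T : H →L[ℂ] H) : ℝ :=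
  ⨆ lam : Ω, ‖(inner ℂ (T (k lam)) (k lam) : ℂ)‖

/-- The absolute value `|T| = (T*T)^(1/2)` of a bounded operator. -/
noncomputable def opAbs {H : Type*} [NormedAddCommGroup H] [InnerProductSpace ℂ H]
    [CompleteSpace H] (T : H →L[ℂ] H) : H →L[ℂ] H :=
  CFC.sqrt (adjoint T * T)


/-!
Mixed Schwarz and AM–GM give `|⟨Ax, x⟩| ≤ ⟨Mx, x⟩` for `M = (|A| + |A*|)/2`, while
`|⟨Ax, x⟩|² ≤ ‖Ax‖² = ⟨|A|² x, x⟩`. McCarthy's inequality `⟨Tx, x⟩ ^ p ≤ ⟨T ^ p x, x⟩`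
(`T ≥ 0`, `‖x‖ = 1`, `p ≥ 1`), which is the tangent-line bound for `t ^ p` pushed through the
functional calculus, turns these into `|⟨Ax, x⟩| ^ (2r) ≤ ⟨M ^ (2r) x, x⟩` and
`|⟨Ax, x⟩| ^ (2r) ≤ ⟨|A| ^ (2r) x, x⟩`, hence into the bound by any convex combination; the
supremum over the kernel vectors finishes.

The mixed Schwarz inequality comes from factoring `A = (A (|A| + ε)^(-1/2)) (|A| + ε)^(1/2)`,
applying Cauchy–Schwarz, and bounding `‖(A (|A| + ε)^(-1/2))* x‖²` by the operator inequality
`A (|A| + ε)⁻¹ A* ≤ |A*|` (its left side squared is at most `A A*`, and the square root is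
operator monotone), then letting `ε → 0`.
-/

lemma Real.tangent_le_rpow {s t p : ℝ} (hs : 0 < s) (ht : 0 ≤ t) (hp : 1 ≤ p) :
    s ^ p + p * s ^ (p - 1) * (t - s) ≤ t ^ p := by
  have hts : t = s * (1 + (t / s - 1)) := by field_simp; ring
  have hbernoulli := one_add_mul_self_le_rpow_one_add
    (by linarith [div_nonneg ht hs.le] : -1 ≤ t / s - 1) hp
  calc s ^ p + p * s ^ (p - 1) * (t - s) = s ^ p * (1 + p * (t / s - 1)) := by
        rw [Real.rpow_sub_one hs.ne']; field_simp
    _ ≤ s ^ p * (1 + (t / s - 1)) ^ p := by gcongr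
    _ = t ^ p := by rw [← Real.mul_rpow hs.le (by linarith [div_nonneg ht hs.le]), ← hts]

namespace CFC

variable {A : Type*} [CStarAlgebra A] [PartialOrder A] [StarOrderedRing A]

lemma tangent_le_rpow {a : A} (ha : 0 ≤ a) {s p : ℝ} (hs : 0 < s) (hp : 1 ≤ p) :
    algebraMap ℝ A (s ^ p) + (p * s ^ (p - 1)) • (a - algebraMap ℝ A s) ≤ a ^ p := by
  have htangent : cfc (fun t : ℝ => s ^ p + p * s ^ (p - 1) * (t - s)) a
      = algebraMap ℝ A (s ^ p) + (p * s ^ (p - 1)) • (a - algebraMap ℝ A s) := by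
    rw [cfc_const_add _ _ a, cfc_const_mul _ _ a, cfc_sub _ _ a, cfc_id' ℝ a, cfc_const s a]
  rw [← htangent, rpow_eq_cfc_real ha]
  exact cfc_mono (fun t ht => Real.tangent_le_rpow hs (spectrum_nonneg_of_nonneg ha ht) hp)
    (by fun_prop) (Real.continuous_rpow_const (by linarith)).continuousOn

lemma mul_cfc_inv_add_mul_star_le_abs_star (a : A) {ε : ℝ} (hε : 0 < ε) :
    a * cfc (fun t => (t + ε)⁻¹) (abs a) * star a ≤ abs (star a) := by
  have hspec : ∀ t ∈ spectrum ℝ (abs a), 0 ≤ t := fun t ht =>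
    spectrum_nonneg_of_nonneg (abs_nonneg a) ht
  have hcont : ContinuousOn (fun t : ℝ => (t + ε)⁻¹) (spectrum ℝ (abs a)) :=
    ContinuousOn.inv₀ (by fun_prop) fun t ht => by linarith [hspec t ht]
  set F := cfc (fun t : ℝ => (t + ε)⁻¹) (abs a)
  have hF : 0 ≤ F := cfc_nonneg fun t ht => _root_.inv_nonneg.2 (by linarith [hspec t ht])
  have hD : 0 ≤ a * F * star a := by
    simpa using star_left_conjugate_nonneg hF (star a)
  have hFaF : F * (star a * a) * F ≤ 1 := by
    have hFaF_eq : F * (star a * a) * F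
        = cfc (fun t => (t + ε)⁻¹ * t * t * (t + ε)⁻¹) (abs a) := by
      rw [cfc_mul (fun t => (t + ε)⁻¹ * t * t) (fun t => (t + ε)⁻¹) _ (by fun_prop) hcont,
        cfc_mul (fun t => (t + ε)⁻¹ * t) (fun t => t) _ (by fun_prop) (by fun_prop),
        cfc_mul (fun t => (t + ε)⁻¹) (fun t => t) _ hcont (by fun_prop), cfc_id' ℝ (abs a),
        ← abs_mul_abs]
      simp only [F, mul_assoc]
    rw [hFaF_eq]
    refine cfc_le_one _ _ fun t ht => ?_
    have ht0 := hspec t ht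
    rw [show (t + ε)⁻¹ * t * t * (t + ε)⁻¹ = (t / (t + ε)) ^ 2 by field_simp]
    exact pow_le_one₀ (by positivity) ((div_le_one (by positivity)).2 (by linarith))
  have hsq : (a * F * star a) * (a * F * star a) ≤ a * star a :=
    calc (a * F * star a) * (a * F * star a) = a * (F * (star a * a) * F) * star a := by
          simp only [mul_assoc]
      _ ≤ a * 1 * star a := star_right_conjugate_le_conjugate hFaF a
      _ = a * star a := by rw [mul_one]
  calc a * F * star a = sqrt ((a * F * star a) * (a * F * star a)) := (sqrt_mul_self _ hD).symm
    _ ≤ sqrt (a * star a) := sqrt_le_sqrt _ _ hsq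
    _ = abs (star a) := by rw [abs, star_star]

end CFC

namespace ContinuousLinearMap

variable {H : Type*} [NormedAddCommGroup H] [InnerProductSpace ℂ H]

@[simp]
lemma reApplyInnerSelf_add (S T : H →L[ℂ] H) (x : H) :
    (S + T).reApplyInnerSelf x = S.reApplyInnerSelf x + T.reApplyInnerSelf x := by
  simp [reApplyInnerSelf_apply, inner_add_left]

@[simp]
lemma reApplyInnerSelf_sub (S T : H →L[ℂ] H) (x : H) :
    (S - T).reApplyInnerSelf x = S.reApplyInnerSelf x - T.reApplyInnerSelf x := by
  simp [reApplyInnerSelf_apply, inner_sub_left]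

@[simp]
lemma reApplyInnerSelf_real_smul (c : ℝ) (T : H →L[ℂ] H) (x : H) :
    (c • T).reApplyInnerSelf x = c * T.reApplyInnerSelf x := by
  simp [reApplyInnerSelf_apply, inner_smul_left_eq_smul]

@[simp]
lemma reApplyInnerSelf_algebraMap (c : ℝ) (x : H) :
    (algebraMap ℝ (H →L[ℂ] H) c).reApplyInnerSelf x = c * ‖x‖ ^ 2 := by
  rw [Algebra.algebraMap_eq_smul_one, reApplyInnerSelf_real_smul]
  exact congrArg (c * ·) (inner_self_eq_norm_sq x)

lemma reApplyInnerSelf_nonneg {T : H →L[ℂ] H} (h : 0 ≤ T) (x : H) :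
    0 ≤ T.reApplyInnerSelf x :=
  ((nonneg_iff_isPositive T).1 h).2 x

lemma reApplyInnerSelf_mono {S T : H →L[ℂ] H} (h : S ≤ T) (x : H) :
    S.reApplyInnerSelf x ≤ T.reApplyInnerSelf x := by
  simpa using ((le_def S T).1 h).2 x

end ContinuousLinearMap

section Hilbert

variable {H : Type*} [NormedAddCommGroup H] [InnerProductSpace ℂ H] [CompleteSpace H]

lemma opAbs_nonneg (T : H →L[ℂ] H) : 0 ≤ opAbs T := CFC.sqrt_nonneg _

lemma ContinuousLinearMap.reApplyInnerSelf_rpow_le {T : H →L[ℂ] H} (hT : 0 ≤ T) {x : H}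
    (hx : ‖x‖ = 1) {p : ℝ} (hp : 1 ≤ p) :
    T.reApplyInnerSelf x ^ p ≤ (T ^ p).reApplyInnerSelf x := by
  rcases (reApplyInnerSelf_nonneg hT x).eq_or_lt with hs | hs
  · rw [← hs, Real.zero_rpow (by linarith)]
    exact reApplyInnerSelf_nonneg CFC.rpow_nonneg x
  · simpa [hx] using reApplyInnerSelf_mono (CFC.tangent_le_rpow hT hs hp) x

lemma norm_inner_sq_le_opAbs_add_mul (A : H →L[ℂ] H) (x : H) {ε : ℝ} (hε : 0 < ε) :
    ‖inner ℂ (A x) x‖ ^ 2 ≤ ((opAbs A).reApplyInnerSelf x + ε * ‖x‖ ^ 2) *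
      (opAbs (adjoint A)).reApplyInnerSelf x := by
  have hA : IsSelfAdjoint (opAbs A) := (opAbs_nonneg A).isSelfAdjoint
  have hspec : ∀ t ∈ spectrum ℝ (opAbs A), 0 < t + ε := fun t ht =>
    by linarith [spectrum_nonneg_of_nonneg (opAbs_nonneg A) ht]
  have hsqrt : ContinuousOn (fun t : ℝ => √(t + ε)) (spectrum ℝ (opAbs A)) := by fun_prop
  have hsqrt_ne : ∀ t ∈ spectrum ℝ (opAbs A), √(t + ε) ≠ 0 := fun t ht =>
    (Real.sqrt_pos.2 (hspec t ht)).ne'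
  have hinv : ContinuousOn (fun t : ℝ => (√(t + ε))⁻¹) (spectrum ℝ (opAbs A)) :=
    hsqrt.inv₀ hsqrt_ne
  set G := cfc (fun t : ℝ => √(t + ε)) (opAbs A)
  set E := cfc (fun t : ℝ => (√(t + ε))⁻¹) (opAbs A)
  have hEG : E * G = 1 := by
    rw [← cfc_mul _ _ _ hinv hsqrt, ← cfc_one ℝ (opAbs A) hA]
    exact cfc_congr fun t ht => inv_mul_cancel₀ (hsqrt_ne t ht)
  have hGG : G * G = opAbs A + algebraMap ℝ _ ε :=
    calc G * G = cfc (fun t : ℝ => t + ε) (opAbs A) := by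
          rw [← cfc_mul _ _ _ hsqrt hsqrt]
          exact cfc_congr fun t ht => Real.mul_self_sqrt (hspec t ht).le
      _ = opAbs A + algebraMap ℝ _ ε := by
          rw [cfc_add_const ε (fun t => t) (opAbs A), cfc_id' ℝ (opAbs A) hA]
  have hEE : E * E = cfc (fun t : ℝ => (t + ε)⁻¹) (opAbs A) := by
    rw [← cfc_mul _ _ _ hinv hinv]
    exact cfc_congr fun t ht => by rw [← mul_inv, Real.mul_self_sqrt (hspec t ht).le]
  have hG : adjoint G = G := (cfc_predicate _ _ : IsSelfAdjoint G)
  have hGx : ‖G x‖ ^ 2 = (opAbs A).reApplyInnerSelf x + ε * ‖x‖ ^ 2 := by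
    rw [apply_norm_sq_eq_inner_adjoint_left, hG, ← mul_def, hGG, ← reApplyInnerSelf_apply,
      reApplyInnerSelf_add, reApplyInnerSelf_algebraMap]
  have hAEx : ‖adjoint (A * E) x‖ ^ 2 ≤ (opAbs (adjoint A)).reApplyInnerSelf x := by
    have hAE : A * E * adjoint (A * E)
        = A * cfc (fun t : ℝ => (t + ε)⁻¹) (opAbs A) * adjoint A := by
      rw [← star_eq_adjoint, star_mul, (cfc_predicate _ _ : IsSelfAdjoint E).star_eq, ← hEE]
      simp only [mul_assoc, star_eq_adjoint]
      rfl
    rw [apply_norm_sq_eq_inner_adjoint_left, adjoint_adjoint, ← mul_def,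
      ← reApplyInnerSelf_apply, hAE]
    exact reApplyInnerSelf_mono (CFC.mul_cfc_inv_add_mul_star_le_abs_star A hε) x
  have hfactor : inner ℂ (A x) x = inner ℂ (G x) (adjoint (A * E) x) := by
    rw [adjoint_inner_right, ← mul_apply_eq_comp, mul_assoc, hEG, mul_one]
  calc ‖inner ℂ (A x) x‖ ^ 2 ≤ (‖G x‖ * ‖adjoint (A * E) x‖) ^ 2 := by
        rw [hfactor]; gcongr; exact norm_inner_le_norm _ _
    _ = ‖G x‖ ^ 2 * ‖adjoint (A * E) x‖ ^ 2 := mul_pow _ _ _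
    _ ≤ _ := by rw [← hGx]; gcongr

lemma norm_inner_sq_le_opAbs_mul (A : H →L[ℂ] H) (x : H) :
    ‖inner ℂ (A x) x‖ ^ 2 ≤
      (opAbs A).reApplyInnerSelf x * (opAbs (adjoint A)).reApplyInnerSelf x := by
  set a := (opAbs A).reApplyInnerSelf x
  set b := (opAbs (adjoint A)).reApplyInnerSelf x
  have hlim : Filter.Tendsto (fun ε => (a + ε * ‖x‖ ^ 2) * b) (nhdsWithin 0 (Set.Ioi 0))
      (nhds (a * b)) := by
    have hcont : Continuous fun ε : ℝ => (a + ε * ‖x‖ ^ 2) * b := by fun_prop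
    simpa using (hcont.tendsto 0).mono_left nhdsWithin_le_nhds
  exact ge_of_tendsto hlim (eventually_nhdsWithin_of_forall fun ε hε =>
    norm_inner_sq_le_opAbs_add_mul A x hε)

lemma norm_inner_le_mean_opAbs (A : H →L[ℂ] H) (x : H) :
    ‖inner ℂ (A x) x‖ ≤
      ((2 : ℝ)⁻¹ • (opAbs A + opAbs (adjoint A))).reApplyInnerSelf x := by
  have ha := reApplyInnerSelf_nonneg (opAbs_nonneg A) x
  have hb := reApplyInnerSelf_nonneg (opAbs_nonneg (adjoint A)) x
  have := norm_inner_sq_le_opAbs_mul A x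
  rw [reApplyInnerSelf_real_smul, reApplyInnerSelf_add]
  nlinarith [sq_nonneg ((opAbs A).reApplyInnerSelf x - (opAbs (adjoint A)).reApplyInnerSelf x),
    norm_nonneg (inner ℂ (A x) x)]

lemma opAbs_rpow_two_mul (A : H →L[ℂ] H) {r : ℝ} (hr : 0 ≤ r) :
    opAbs A ^ (2 * r) = (adjoint A * A) ^ r := by
  rw [← CFC.rpow_rpow_of_exponent_nonneg _ 2 r zero_le_two hr (opAbs_nonneg A),
    ← Nat.cast_ofNat, CFC.rpow_natCast _ 2 (opAbs_nonneg A)]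
  exact congrArg (· ^ r) (CFC.abs_sq A)

lemma norm_inner_rpow_le_opAbs_rpow (A : H →L[ℂ] H) {x : H} (hx : ‖x‖ = 1) {r : ℝ}
    (hr : 1 ≤ r) : ‖inner ℂ (A x) x‖ ^ (2 * r) ≤ (opAbs A ^ (2 * r)).reApplyInnerSelf x := by
  have hAx : ‖inner ℂ (A x) x‖ ≤ ‖A x‖ := by
    simpa [hx] using norm_inner_le_norm (𝕜 := ℂ) (A x) x
  have hP : 0 ≤ adjoint A * A := by simpa [star_eq_adjoint] using star_mul_self_nonneg A
  rw [opAbs_rpow_two_mul A (by linarith), Real.rpow_mul (norm_nonneg _)]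
  calc (‖inner ℂ (A x) x‖ ^ (2 : ℝ)) ^ r ≤ (‖A x‖ ^ 2) ^ r := by
        norm_cast; gcongr
    _ = (adjoint A * A).reApplyInnerSelf x ^ r := by
        rw [apply_norm_sq_eq_inner_adjoint_left]; rfl
    _ ≤ ((adjoint A * A) ^ r).reApplyInnerSelf x := reApplyInnerSelf_rpow_le hP hx hr

lemma norm_inner_rpow_le_convex_comb (A : H →L[ℂ] H) {x : H} (hx : ‖x‖ = 1) {r : ℝ}
    (hr : 1 ≤ r) {α : ℝ} (hα : α ∈ Set.Icc (0 : ℝ) 1) :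
    ‖inner ℂ (A x) x‖ ^ (2 * r) ≤
      (α • ((2 : ℝ)⁻¹ • (opAbs A + opAbs (adjoint A))) ^ (2 * r)
        + (1 - α) • opAbs A ^ (2 * r)).reApplyInnerSelf x := by
  have hM : 0 ≤ (2 : ℝ)⁻¹ • (opAbs A + opAbs (adjoint A)) :=
    smul_nonneg (by norm_num) (add_nonneg (opAbs_nonneg _) (opAbs_nonneg _))
  have hmean : ‖inner ℂ (A x) x‖ ^ (2 * r) ≤
      (((2 : ℝ)⁻¹ • (opAbs A + opAbs (adjoint A))) ^ (2 * r)).reApplyInnerSelf x :=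
    (Real.rpow_le_rpow (norm_nonneg _) (norm_inner_le_mean_opAbs A x) (by linarith)).trans
      (reApplyInnerSelf_rpow_le hM hx (by linarith))
  have habs := norm_inner_rpow_le_opAbs_rpow A hx hr
  rw [reApplyInnerSelf_add, reApplyInnerSelf_real_smul, reApplyInnerSelf_real_smul]
  nlinarith [hα.1, hα.2]

end Hilbert

section Berezin

variable {H : Type*} [NormedAddCommGroup H] [InnerProductSpace ℂ H] {Ω : Type*} {k : Ω → H}

lemma norm_inner_le_ber (hk : ∀ lam, ‖k lam‖ = 1) (T : H →L[ℂ] H) (lam : Ω) :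
    ‖inner ℂ (T (k lam)) (k lam)‖ ≤ ber k T := by
  refine le_ciSup (f := fun μ => ‖inner ℂ (T (k μ)) (k μ)‖) ⟨‖T‖, ?_⟩ lam
  rintro _ ⟨μ, rfl⟩
  calc ‖inner ℂ (T (k μ)) (k μ)‖ ≤ ‖T (k μ)‖ * ‖k μ‖ := norm_inner_le_norm _ _
    _ ≤ ‖T‖ * ‖k μ‖ * ‖k μ‖ := by gcongr; exact T.le_opNorm _
    _ = ‖T‖ := by rw [hk, mul_one, mul_one]

lemma ber_rpow_le_ber (hk : ∀ lam, ‖k lam‖ = 1) {p : ℝ} (hp : 0 < p) {S T : H →L[ℂ] H}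
    (h : ∀ lam, ‖inner ℂ (S (k lam)) (k lam)‖ ^ p ≤ ‖inner ℂ (T (k lam)) (k lam)‖) :
    ber k S ^ p ≤ ber k T := by
  have hS : 0 ≤ ber k S := Real.iSup_nonneg fun _ => norm_nonneg _
  have hT : 0 ≤ ber k T := Real.iSup_nonneg fun _ => norm_nonneg _
  refine (Real.le_rpow_inv_iff_of_pos hS hT hp).1 (Real.iSup_le (fun lam => ?_) (by positivity))
  exact (Real.le_rpow_inv_iff_of_pos (norm_nonneg _) hT hp).2
    ((h lam).trans (norm_inner_le_ber hk T lam))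

end Berezin

theorem berezin_power_inequality_mean_abs'_general
    {H : Type*} [NormedAddCommGroup H] [InnerProductSpace ℂ H] [CompleteSpace H]
    {Ω : Type*} (k : Ω → H) (hk : ∀ lam, ‖k lam‖ = 1)
    (A : H →L[ℂ] H) (r : ℝ) (hr : 1 ≤ r) (α : ℝ) (hα : α ∈ Set.Icc (0 : ℝ) 1) :
    ber k A ^ (2 * r) ≤
      ber k (α • CFC.rpow ((2 : ℝ)⁻¹ • (opAbs A + opAbs (adjoint A))) (2 * r)
        + (1 - α) • CFC.rpow (opAbs A) (2 * r)) :=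
  ber_rpow_le_ber hk (by linarith) fun lam =>
    (norm_inner_rpow_le_convex_comb A (hk lam) hr hα).trans (RCLike.re_le_norm _)

theorem berezin_power_inequality_mean_abs'
    {H : Type*} [NormedAddCommGroup H] [InnerProductSpace ℂ H] [CompleteSpace H]
    {Ω : Type*} [Nonempty Ω] (k : Ω → H) (hk : ∀ lam, ‖k lam‖ = 1)
    (A : H →L[ℂ] H) (r : ℝ) (hr : 1 ≤ r) (α : ℝ) (hα : α ∈ Set.Icc (0 : ℝ) 1) :
    ber k A ^ (2 * r) ≤
      ber k (α • CFC.rpow ((2 : ℝ)⁻¹ • (opAbs A + opAbs (adjoint A))) (2 * r)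
        + (1 - α) • CFC.rpow (opAbs A) (2 * r)) :=
  berezin_power_inequality_mean_abs'_general k hk A r hr α hα
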